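/- arXiv:1308.1237 — 4 statements merged into one kernel-verified Lean document; each statement's English description precedes it below -/
import Mathlib

section
/- For the boundary function g(m,k) = m^{1/2}(1+k/m)(k/(k+m))^γ with 0 ≤ γ < 1/2 and any fixed ξ < 1/2, one has lim_{m→∞} sup_{k ≥ 1} k^ξ / g(m,k) = 0. -/
/-!
Since `1 + k/m = (k+m)/m`, the ratio simplifies to `k^ξ / g(m,k) = m^{1/2} k^{ξ-γ} (k+m)^{γ-1}`.
With `μ = max ξ γ < 1/2` and `k ≥ 1` we have `k^{ξ-γ} ≤ (k+m)^{μ-γ}`, so the ratio is at most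
`m^{1/2} (k+m)^{μ-1} ≤ m^{μ-1/2}`, a bound uniform in `k` that tends to `0`.
-/

open Filter

noncomputable def boundaryFn (γ m k : ℝ) : ℝ :=
  √m * (1 + k / m) * (k / (k + m)) ^ γ

lemma rpow_div_boundaryFn_eq {γ ξ m k : ℝ} (hm : 0 < m) (hk : 0 < k) :
    k ^ ξ / boundaryFn γ m k = m ^ (1/2 : ℝ) * k ^ (ξ - γ) * (k + m) ^ (γ - 1) := by
  have hkm : 0 < k + m := by linarith
  rw [boundaryFn, Real.sqrt_eq_rpow, Real.div_rpow hk.le hkm.le, Real.rpow_sub hk,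
    Real.rpow_sub hkm, Real.rpow_one]
  have : m ^ (1/2 : ℝ) ≠ 0 := (Real.rpow_pos_of_pos hm _).ne'
  have : k ^ γ ≠ 0 := (Real.rpow_pos_of_pos hk _).ne'
  have : (k + m) ^ γ ≠ 0 := (Real.rpow_pos_of_pos hkm _).ne'
  field_simp
  rw [← Real.sqrt_eq_rpow, Real.sq_sqrt hm.le]
  ring

lemma rpow_sub_le_add_rpow_max_sub {γ ξ m k : ℝ} (hm : 0 ≤ m) (hk : 1 ≤ k) :
    k ^ (ξ - γ) ≤ (k + m) ^ (max ξ γ - γ) :=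
  calc k ^ (ξ - γ) ≤ k ^ (max ξ γ - γ) :=
        Real.rpow_le_rpow_of_exponent_le hk (by gcongr; exact le_max_left ξ γ)
    _ ≤ (k + m) ^ (max ξ γ - γ) :=
        Real.rpow_le_rpow (by linarith) (by linarith) (by simp)

lemma rpow_div_boundaryFn_le {γ ξ m k : ℝ} (hγ : γ ≤ 1) (hξ : ξ ≤ 1) (hm : 0 < m) (hk : 1 ≤ k) :
    k ^ ξ / boundaryFn γ m k ≤ m ^ (max ξ γ - 1/2) := by
  have hkm : 0 < k + m := by linarith
  rw [rpow_div_boundaryFn_eq hm (by linarith)]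
  calc m ^ (1/2 : ℝ) * k ^ (ξ - γ) * (k + m) ^ (γ - 1)
      ≤ m ^ (1/2 : ℝ) * (k + m) ^ (max ξ γ - γ) * (k + m) ^ (γ - 1) := by
        gcongr; exact rpow_sub_le_add_rpow_max_sub hm.le hk
    _ = m ^ (1/2 : ℝ) * (k + m) ^ (max ξ γ - 1) := by
        rw [mul_assoc, ← Real.rpow_add hkm]; ring_nf
    _ ≤ m ^ (1/2 : ℝ) * m ^ (max ξ γ - 1) := by
        refine mul_le_mul_of_nonneg_left ?_ (by positivity)
        exact Real.rpow_le_rpow_of_nonpos hm (by linarith) (by linarith [max_le hξ hγ])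
    _ = m ^ (max ξ γ - 1/2) := by
        rw [← Real.rpow_add hm]; ring_nf

theorem sup_kxi_div_g_tendsto_zero_general
    (γ ξ : ℝ) (hγ : γ < 1/2) (hξ : ξ < 1/2) :
    Tendsto (fun m : ℕ =>
      ⨆ k : {k : ℕ // 1 ≤ k},
        ((k.1 : ℝ) ^ ξ) /
          (Real.sqrt m * (1 + (k.1 : ℝ) / m) * ((k.1 : ℝ) / ((k.1 : ℝ) + m)) ^ γ))
      atTop (nhds 0) := by
  have hexp : max ξ γ - 1/2 < 0 := by linarith [max_lt hξ hγ]
  have hbound : Tendsto (fun m : ℕ => (m : ℝ) ^ (max ξ γ - 1/2)) atTop (nhds 0) :=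
    (tendsto_rpow_neg_atTop (neg_pos.mpr hexp)).comp tendsto_natCast_atTop_atTop
      |>.congr fun m => by simp
  refine squeeze_zero' (Eventually.of_forall fun m => Real.iSup_nonneg fun k => by positivity)
    ?_ hbound
  filter_upwards [eventually_gt_atTop 0] with m hm
  exact Real.iSup_le (fun k => rpow_div_boundaryFn_le (γ := γ) (by linarith) (by linarith)
    (by exact_mod_cast hm) (by exact_mod_cast k.2)) (by positivity)

/-- For `g(m,k) = m^{1/2}(1+k/m)(k/(k+m))^γ` with `0 ≤ γ < 1/2` and
any fixed `ξ < 1/2`, one has `lim_{m→∞} sup_{k ≥ 1} k^ξ / g(m,k) = 0`. -/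
theorem sup_kxi_div_g_tendsto_zero
    (γ ξ : ℝ) (hγ0 : 0 ≤ γ) (hγ : γ < 1/2) (hξ : ξ < 1/2) :
    Tendsto (fun m : ℕ =>
      ⨆ k : {k : ℕ // 1 ≤ k},
        ((k.1 : ℝ) ^ ξ) /
          (Real.sqrt m * (1 + (k.1 : ℝ) / m) * ((k.1 : ℝ) / ((k.1 : ℝ) + m)) ^ γ))
      atTop (nhds 0) :=
  sup_kxi_div_g_tendsto_zero_general γ ξ hγ hξ
end

section
/- For the boundary function g(m,k) = m^{1/2}(1+k/m)(k/(k+m))^γ with 0 ≤ γ < 1/2 and any fixed ξ < 1/2, one has lim_{m→∞} sup_{k ≥ 1} k m^{ξ-1} / g(m,k) = 0. -/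
open Filter

/-! Each term of the supremum is `m ^ (ξ - 1/2)` damped by `(k / (k + m)) ^ (1 - γ) ≤ 1`, so the
supremum is at most `m ^ (ξ - 1/2)`, which tends to zero since `ξ < 1/2`. -/

lemma mul_rpow_div_sqrt_mul_eq {m k : ℝ} (hm : 0 < m) (hk : 0 < k) (γ ξ : ℝ) :
    k * m ^ (ξ - 1) / (Real.sqrt m * (1 + k / m) * (k / (k + m)) ^ γ)
      = m ^ (ξ - 1/2) * (k / (k + m)) ^ (1 - γ) := by
  have hkm : 0 < k + m := by linarith
  have hx : 0 < k / (k + m) := div_pos hk hkm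
  rw [Real.rpow_sub hx, Real.rpow_one, Real.rpow_sub hm, Real.rpow_sub hm, Real.rpow_one,
    ← Real.sqrt_eq_rpow]
  field_simp
  ring

lemma mul_rpow_div_sqrt_mul_le {m k : ℝ} (hm : 0 < m) (hk : 0 < k) {γ : ℝ} (hγ : γ ≤ 1) (ξ : ℝ) :
    k * m ^ (ξ - 1) / (Real.sqrt m * (1 + k / m) * (k / (k + m)) ^ γ) ≤ m ^ (ξ - 1/2) := by
  rw [mul_rpow_div_sqrt_mul_eq hm hk]
  have hkm : 0 < k + m := by linarith
  have hx_le : (k / (k + m)) ^ (1 - γ) ≤ 1 :=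
    Real.rpow_le_one (div_pos hk hkm).le ((div_le_one hkm).mpr (by linarith)) (by linarith)
  exact mul_le_of_le_one_right (Real.rpow_nonneg hm.le _) hx_le

theorem sup_k_mxi_div_g_tendsto_zero_general
    (γ ξ : ℝ) (hγ : γ < 1/2) (hξ : ξ < 1/2) :
    Tendsto (fun m : ℕ =>
      ⨆ k : {k : ℕ // 1 ≤ k},
        ((k.1 : ℝ) * (m : ℝ) ^ (ξ - 1)) /
          (Real.sqrt m * (1 + (k.1 : ℝ) / m) * ((k.1 : ℝ) / ((k.1 : ℝ) + m)) ^ γ))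
      atTop (nhds 0) := by
  have hdecay : Tendsto (fun m : ℕ => (m : ℝ) ^ (ξ - 1/2)) atTop (nhds 0) := by
    simpa [Function.comp_def, neg_sub] using
      (tendsto_rpow_neg_atTop (by linarith : (0:ℝ) < 1/2 - ξ)).comp tendsto_natCast_atTop_atTop
  refine squeeze_zero' (Eventually.of_forall fun m => Real.iSup_nonneg fun k => by positivity)
    ?_ hdecay
  filter_upwards [eventually_gt_atTop 0] with m hm
  exact ciSup_le fun k => mul_rpow_div_sqrt_mul_le (by exact_mod_cast hm)
    (by exact_mod_cast k.2) (by linarith) ξ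

/-- For `g(m,k) = m^{1/2}(1+k/m)(k/(k+m))^γ` with `0 ≤ γ < 1/2` and
any fixed `ξ < 1/2`, one has `lim_{m→∞} sup_{k ≥ 1} k m^{ξ-1} / g(m,k) = 0`. -/
theorem sup_k_mxi_div_g_tendsto_zero
    (γ ξ : ℝ) (hγ0 : 0 ≤ γ) (hγ : γ < 1/2) (hξ : ξ < 1/2) :
    Tendsto (fun m : ℕ =>
      ⨆ k : {k : ℕ // 1 ≤ k},
        ((k.1 : ℝ) * (m : ℝ) ^ (ξ - 1)) /
          (Real.sqrt m * (1 + (k.1 : ℝ) / m) * ((k.1 : ℝ) / ((k.1 : ℝ) + m)) ^ γ))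
      atTop (nhds 0) :=
  sup_k_mxi_div_g_tendsto_zero_general γ ξ hγ hξ
end

section
/- If 1/2 ≤ ρ < 1 and 0 < δ < 1/2, then lim_{m→∞} sup_{k ≥ 1} (k m^{ρ-1} + k^{1-δ}) / (m^{1/2} g(m,k)) = 0, where g(m,k) = m^{1/2}(1+k/m)(k/(k+m))^γ with 0 ≤ γ < 1/2. -/
/-!
The denominator equals `(k + m) (k / (k + m)) ^ γ`, and since `k / (k + m) ≤ 1` and `γ ≤ 1/2` it
is at least `√(k + m) √k`. Against this, `k m^(ρ-1)` contributes at most `m^(ρ-1)` and `k^(1-δ)`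
at most `(k + m)^(-δ) ≤ m^(-δ)`, uniformly in `k`; both bounds tend to `0`.
-/

open Filter

namespace Real

variable {K M : ℝ}

lemma sqrt_mul_sqrt_mul_one_add_div (hM : 0 < M) (K r : ℝ) :
    √M * (√M * (1 + K / M) * r) = (K + M) * r := by
  rw [← mul_assoc, ← mul_assoc, mul_self_sqrt hM.le]
  field_simp
  ring

lemma sqrt_add_mul_sqrt_le_mul_div_rpow (hK : 0 < K) (hM : 0 ≤ M) {γ : ℝ} (hγ : γ ≤ 1 / 2) :
    √(K + M) * √K ≤ (K + M) * (K / (K + M)) ^ γ := by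
  have hKM : 0 < K + M := by linarith
  calc √(K + M) * √K = (K + M) * √(K / (K + M)) := by
        rw [sqrt_div' K hKM.le, mul_div_left_comm, div_sqrt, mul_comm]
    _ ≤ (K + M) * (K / (K + M)) ^ γ := by
        rw [sqrt_eq_rpow]
        refine mul_le_mul_of_nonneg_left ?_ hKM.le
        exact rpow_le_rpow_of_exponent_ge (div_pos hK hKM)
          (div_le_one_of_le₀ (by linarith) hKM.le) hγ

lemma mul_div_sqrt_add_mul_sqrt_le (hK : 0 < K) (hM : 0 ≤ M) {a : ℝ} (ha : 0 ≤ a) :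
    K * a / (√(K + M) * √K) ≤ a := by
  rw [div_le_iff₀ (by positivity)]
  calc K * a = a * (√K * √K) := by rw [mul_self_sqrt hK.le, mul_comm]
    _ ≤ a * (√(K + M) * √K) := by gcongr; linarith

lemma rpow_one_sub_div_sqrt_add_mul_sqrt_le (hK : 0 < K) (hM : 0 < M) {δ : ℝ} (hδ0 : 0 ≤ δ)
    (hδ : δ ≤ 1 / 2) : K ^ (1 - δ) / (√(K + M) * √K) ≤ M ^ (-δ) := by
  have hKM : 0 < K + M := by linarith
  rw [div_le_iff₀ (by positivity), sqrt_eq_rpow, sqrt_eq_rpow]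
  calc K ^ (1 - δ) = K ^ (1 / 2 - δ) * K ^ (1 / 2 : ℝ) := by
        rw [← rpow_add hK]; ring_nf
    _ ≤ (K + M) ^ (1 / 2 - δ) * K ^ (1 / 2 : ℝ) := by
        gcongr
        linarith
    _ = (K + M) ^ (-δ) * ((K + M) ^ (1 / 2 : ℝ) * K ^ (1 / 2 : ℝ)) := by
        rw [← mul_assoc, ← rpow_add hKM]; ring_nf
    _ ≤ M ^ (-δ) * ((K + M) ^ (1 / 2 : ℝ) * K ^ (1 / 2 : ℝ)) :=
        mul_le_mul_of_nonneg_right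
          (rpow_le_rpow_of_nonpos hM (le_add_of_nonneg_left hK.le) (neg_nonpos.mpr hδ0))
          (by positivity)

end Real

lemma drift_ratio_le {K M : ℝ} (hK : 0 < K) (hM : 0 < M) {a γ δ : ℝ} (ha : 0 ≤ a)
    (hγ : γ ≤ 1 / 2) (hδ0 : 0 ≤ δ) (hδ : δ ≤ 1 / 2) :
    (K * a + K ^ (1 - δ)) / (√M * (√M * (1 + K / M) * (K / (K + M)) ^ γ)) ≤ a + M ^ (-δ) := by
  rw [Real.sqrt_mul_sqrt_mul_one_add_div hM]
  calc (K * a + K ^ (1 - δ)) / ((K + M) * (K / (K + M)) ^ γ)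
      ≤ (K * a + K ^ (1 - δ)) / (√(K + M) * √K) :=
        div_le_div_of_nonneg_left (by positivity) (by positivity)
          (Real.sqrt_add_mul_sqrt_le_mul_div_rpow hK hM.le hγ)
    _ ≤ a + M ^ (-δ) := by
        rw [add_div]
        exact add_le_add (Real.mul_div_sqrt_add_mul_sqrt_le hK hM.le ha)
          (Real.rpow_one_sub_div_sqrt_add_mul_sqrt_le hK hM hδ0 hδ)

theorem sup_drift_div_sqrtm_g_tendsto_zero_general
    (γ ρ δ : ℝ) (hγ : γ < 1/2)
    (hρ2 : ρ < 1) (hδ1 : 0 < δ) (hδ2 : δ < 1/2) :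
    Tendsto (fun m : ℕ =>
      ⨆ k : {k : ℕ // 1 ≤ k},
        ((k.1 : ℝ) * (m : ℝ) ^ (ρ - 1) + (k.1 : ℝ) ^ (1 - δ)) /
          (Real.sqrt m *
            (Real.sqrt m * (1 + (k.1 : ℝ) / m) * ((k.1 : ℝ) / ((k.1 : ℝ) + m)) ^ γ)))
      atTop (nhds 0) := by
  have hpow : ∀ {s : ℝ}, 0 < s → Tendsto (fun m : ℕ => (m : ℝ) ^ (-s)) atTop (nhds 0) :=
    fun hs => (tendsto_rpow_neg_atTop hs).comp tendsto_natCast_atTop_atTop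
  have hbound : Tendsto (fun m : ℕ => (m : ℝ) ^ (ρ - 1) + (m : ℝ) ^ (-δ)) atTop (nhds 0) := by
    simpa [neg_sub] using (hpow (sub_pos.mpr hρ2)).add (hpow hδ1)
  refine squeeze_zero' (Eventually.of_forall fun m => Real.iSup_nonneg fun k => by positivity)
    ?_ hbound
  filter_upwards [eventually_gt_atTop 0] with m hm
  refine ciSup_le fun ⟨k, hk⟩ => drift_ratio_le (by exact_mod_cast hk) (by exact_mod_cast hm)
    (by positivity) hγ.le hδ1.le hδ2.le

/-- If `1/2 ≤ ρ < 1` and `0 < δ < 1/2`, then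
`lim_{m→∞} sup_{k ≥ 1} (k m^{ρ-1} + k^{1-δ}) / (m^{1/2} g(m,k)) = 0`,
where `g(m,k) = m^{1/2}(1+k/m)(k/(k+m))^γ` with `0 ≤ γ < 1/2`. -/
theorem sup_drift_div_sqrtm_g_tendsto_zero
    (γ ρ δ : ℝ) (hγ0 : 0 ≤ γ) (hγ : γ < 1/2)
    (hρ1 : 1/2 ≤ ρ) (hρ2 : ρ < 1) (hδ1 : 0 < δ) (hδ2 : δ < 1/2) :
    Tendsto (fun m : ℕ =>
      ⨆ k : {k : ℕ // 1 ≤ k},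
        ((k.1 : ℝ) * (m : ℝ) ^ (ρ - 1) + (k.1 : ℝ) ^ (1 - δ)) /
          (Real.sqrt m *
            (Real.sqrt m * (1 + (k.1 : ℝ) / m) * ((k.1 : ℝ) / ((k.1 : ℝ) + m)) ^ γ)))
      atTop (nhds 0) :=
  sup_drift_div_sqrtm_g_tendsto_zero_general γ ρ δ hγ hρ2 hδ1 hδ2
end

section
/- For u(t) = (1+t)(t/(1+t))^γ with 0 ≤ γ < 1/2, for all real t > 0 and positive integer m, |(t/m)/u(t/m) − (t/m)/u(⌈t⌉/m)| ≤ 1 − ((t+m)/(t+m+1))^{1−γ} (t/(t+1))^γ. -/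
/-- For `u(t) = (1+t)(t/(1+t))^γ` with `0 ≤ γ < 1/2`, for all real `t > 0`
and positive integers `m`,
`|(t/m)/u(t/m) − (t/m)/u(⌈t⌉/m)| ≤ 1 − ((t+m)/(t+m+1))^{1−γ} (t/(t+1))^γ`. -/
theorem ceil_ratio_bound
    (γ : ℝ) (hγ0 : 0 ≤ γ) (hγ : γ < 1/2)
    (u : ℝ → ℝ) (hu : ∀ t : ℝ, u t = (1 + t) * (t / (1 + t)) ^ γ)
    (t : ℝ) (ht : 0 < t) (m : ℕ) (hm : 1 ≤ m) :
    |(t / m) / u (t / m) - (t / m) / u ((⌈t⌉₊ : ℝ) / m)|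
      ≤ 1 - ((t + m) / (t + m + 1)) ^ (1 - γ) * (t / (t + 1)) ^ γ := by
  have hm' : (0:ℝ) < m := by exact_mod_cast hm
  set c : ℝ := (⌈t⌉₊ : ℝ) with hc
  have htc : t ≤ c := Nat.le_ceil t
  have hct : c ≤ t + 1 := le_of_lt (by exact_mod_cast Nat.ceil_lt_add_one ht.le)
  have hc0 : 0 < c := lt_of_lt_of_le ht htc
  have h1 : 0 < t + m := by positivity
  have h2 : 0 < c + m := by positivity
  have h3 : 0 < t + m + 1 := by positivity
  have h4 : 0 < t + 1 := by positivity
  have hγ1 : 0 ≤ 1 - γ := by linarith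
  -- first term
  have e1 : (t / m) / u (t / m) = (t/(t+m)) ^ (1 - γ) := by
    rw [hu]
    have h1s : (1 : ℝ) + t/m = (t+m)/m := by field_simp; ring
    have h2s : t/m / ((t+m)/m) = t/(t+m) := by
      field_simp
    rw [h1s, h2s]
    have hb : (0:ℝ) < t/(t+m) := by positivity
    have hp : ((t/(t+m)):ℝ)^γ ≠ 0 := ne_of_gt (Real.rpow_pos_of_pos hb γ)
    rw [Real.rpow_sub hb, Real.rpow_one]
    rw [div_eq_div_iff (by positivity) (by positivity)]
    field_simp
  -- second term
  have e2 : (t / m) / u (c / m) = (t/(c+m)) ^ (1 - γ) * (t/c) ^ γ := by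
    rw [hu]
    have h1s : (1 : ℝ) + c/m = (c+m)/m := by field_simp; ring
    have h2s : c/m / ((c+m)/m) = c/(c+m) := by
      field_simp
    rw [h1s, h2s]
    have key : (t/(c+m)) ^ (1-γ) * (t/c) ^ γ * (c/(c+m)) ^ γ = t/(c+m) := by
      rw [mul_assoc, ← Real.mul_rpow (by positivity) (by positivity)]
      have : t/c * (c/(c+m)) = t/(c+m) := by
        field_simp
      rw [this, ← Real.rpow_add (by positivity)]
      norm_num
    have hpow : (0:ℝ) < (c/(c+m)) ^ γ := Real.rpow_pos_of_pos (by positivity) _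
    rw [eq_comm, eq_div_iff (by positivity)]
    calc (t/(c+m)) ^ (1-γ) * (t/c) ^ γ * ((c+m)/m * (c/(c+m)) ^ γ)
        = ((t/(c+m)) ^ (1-γ) * (t/c) ^ γ * (c/(c+m)) ^ γ) * ((c+m)/m) := by ring
      _ = (t/(c+m)) * ((c+m)/m) := by rw [key]
      _ = t/m := by field_simp
  rw [e1, e2]
  set A : ℝ := (t/(t+m)) ^ (1-γ) with hA
  set B : ℝ := ((t+m)/(t+m+1)) ^ (1-γ) with hB
  set C : ℝ := (t/(t+1)) ^ γ with hC
  set D : ℝ := (t/(c+m)) ^ (1-γ) * (t/c) ^ γ with hD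
  have hA1 : A ≤ 1 := Real.rpow_le_one (by positivity) (by rw [div_le_one h1]; linarith) hγ1
  have hB1 : B ≤ 1 := Real.rpow_le_one (by positivity) (by rw [div_le_one h3]; linarith) hγ1
  have hC1 : C ≤ 1 := Real.rpow_le_one (by positivity) (by rw [div_le_one h4]; linarith) hγ0
  have hBnn : 0 ≤ B := Real.rpow_nonneg (by positivity) _
  have hCnn : 0 ≤ C := Real.rpow_nonneg (by positivity) _
  have hAnn : 0 ≤ A := Real.rpow_nonneg (by positivity) _
  have hDA : D ≤ A := by
    calc D ≤ (t/(t+m)) ^ (1-γ) * 1 := by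
            apply mul_le_mul
            · exact Real.rpow_le_rpow (by positivity)
                (div_le_div_of_nonneg_left ht.le h1 (by linarith)) hγ1
            · exact Real.rpow_le_one (by positivity)
                (by rw [div_le_one hc0]; linarith) hγ0
            · exact Real.rpow_nonneg (by positivity) _
            · exact Real.rpow_nonneg (by positivity) _
      _ = A := by rw [mul_one]
  have hAB : A * B = (t/(t+m+1)) ^ (1-γ) := by
    rw [hA, hB, ← Real.mul_rpow (by positivity) (by positivity)]
    congr 1
    field_simp
  have hABC : A * B * C ≤ D := by
    rw [hAB]
    apply mul_le_mul
    · exact Real.rpow_le_rpow (by positivity)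
        (div_le_div_of_nonneg_left ht.le h2 (by linarith)) hγ1
    · exact Real.rpow_le_rpow (by positivity)
        (div_le_div_of_nonneg_left ht.le hc0 (by linarith)) hγ0
    · exact Real.rpow_nonneg (by positivity) _
    · exact Real.rpow_nonneg (by positivity) _
  rw [abs_of_nonneg (by linarith)]
  nlinarith [mul_nonneg hBnn hCnn, mul_le_one₀ hB1 hCnn hC1]
end
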